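/- There exists C > 0 such that for every c : ℕ → ℂ and B ≥ 0 with (1+n)^{1/4} |c_n| ≤ B for all n ∈ ℕ, one has, for every z ∈ ℂ, Σ_{n=0}^{∞} |c_n φ_n(z)| ≤ C B; in particular the series Σ c_n φ_n(z) converges absolutely and |Σ_{n=0}^{∞} c_n φ_n(z)| ≤ C B for every z ∈ ℂ. -/

import Mathlib

/-!
Stirling's bound `n! ≥ √(2πn) (n/e)^n`, together with `t ≤ e^{t-1}` at `t = |z|/√n`, gives
`|φ_n(z)| ≤ (1+n)^{-1/4} e^{-(√n-|z|)²/2}`, so the `n`-th term is at most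
`B (1+n)^{-1/2} e^{-(√n-|z|)²/2}`. As `√(n+1) - √n ≥ 1/(2√(n+1))`, this is dominated by a
constant times the integral of the Gaussian `e^{-(s-|z|)²/4}` over `[√n, √(n+1)]`; these
intervals tile `[0, ∞)`, so the whole sum is bounded by a constant times
`∫ e^{-(s-|z|)²/4} ds = 2√π`, uniformly in `z`.
-/

/-- The special Hermite function `φ_n(z) = z^n e^{-|z|²/2} / √(π n!)`. -/
noncomputable def hermiteFn (n : ℕ) (z : ℂ) : ℂ :=
  z ^ n * Complex.exp (-(‖z‖ : ℂ) ^ 2 / 2) / (Real.sqrt (Real.pi * n.factorial) : ℂ)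

open Real MeasureTheory

lemma pow_le_sqrt_pow_mul_exp (n : ℕ) {r : ℝ} (hr : 0 ≤ r) :
    r ^ n ≤ √n ^ n * exp (√n * r - n) := by
  rcases n.eq_zero_or_pos with rfl | hn
  · simp
  have hs : 0 < √(n : ℝ) := sqrt_pos.2 (by exact_mod_cast hn)
  have hsq : √(n : ℝ) ^ 2 = n := sq_sqrt (Nat.cast_nonneg n)
  -- `t ≤ exp (t - 1)` at `t = r / √n`, raised to the `n`-th power
  have ht : r / √n ≤ exp (r / √n - 1) := by linarith [add_one_le_exp (r / √n - 1)]
  have hexp : exp (r / √n - 1) ^ n = exp (√n * r - n) := by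
    rw [← exp_nat_mul]
    congr 1
    field_simp
    linear_combination (-r) * hsq
  calc r ^ n = √n ^ n * (r / √n) ^ n := by rw [div_pow, mul_div_cancel₀ _ (by positivity)]
    _ ≤ √n ^ n * exp (√n * r - n) := by
      rw [← hexp]
      gcongr

lemma pow_mul_exp_neg_sq_le (n : ℕ) {r : ℝ} (hr : 0 ≤ r) :
    r ^ n * exp (-r ^ 2 / 2) ≤ √n ^ n * exp (-n / 2) * exp (-(√n - r) ^ 2 / 2) := by
  have hsq : √(n : ℝ) ^ 2 = n := sq_sqrt (Nat.cast_nonneg n)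
  calc r ^ n * exp (-r ^ 2 / 2) ≤ √n ^ n * exp (√n * r - n) * exp (-r ^ 2 / 2) := by
        gcongr
        exact pow_le_sqrt_pow_mul_exp n hr
    _ = √n ^ n * exp (-n / 2) * exp (-(√n - r) ^ 2 / 2) := by
        rw [mul_assoc, mul_assoc, ← exp_add, ← exp_add]
        congr 2
        linear_combination (1 / 2 : ℝ) * hsq

lemma rpow_quarter_mul_self {x : ℝ} (hx : 0 ≤ x) :
    x ^ ((1 : ℝ) / 4) * x ^ ((1 : ℝ) / 4) = √x := by
  rw [← rpow_add' hx (by norm_num), sqrt_eq_rpow]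
  norm_num

lemma sqrt_one_add_mul_div_exp_pow_le_pi_mul_factorial (n : ℕ) :
    √(1 + n) * (n / exp 1) ^ n ≤ π * n.factorial := by
  have hπ : 1 ≤ π := by linarith [pi_gt_three]
  rcases n.eq_zero_or_pos with rfl | hn
  · simpa using hπ
  have hn' : (1 : ℝ) ≤ n := by exact_mod_cast hn
  calc √(1 + n) * (n / exp 1) ^ n ≤ √(2 * π * n) * (n / exp 1) ^ n := by
        gcongr
        nlinarith
    _ ≤ n.factorial := Stirling.le_factorial_stirling n
    _ ≤ π * n.factorial := le_mul_of_one_le_left (by positivity) hπ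

lemma rpow_quarter_mul_le_sqrt_pi_mul_factorial (n : ℕ) :
    ((1 : ℝ) + n) ^ ((1 : ℝ) / 4) * (√n ^ n * exp (-n / 2)) ≤ √(π * n.factorial) := by
  apply le_sqrt_of_sq_le
  have h1 : (0 : ℝ) ≤ 1 + n := by positivity
  calc (((1 : ℝ) + n) ^ ((1 : ℝ) / 4) * (√n ^ n * exp (-n / 2))) ^ 2
      = √(1 + n) * (n / exp 1) ^ n := by
        rw [mul_pow, sq, rpow_quarter_mul_self h1, mul_pow, ← pow_mul, mul_comm n 2, pow_mul,
          sq_sqrt (Nat.cast_nonneg n), ← exp_nat_mul, div_pow, ← exp_nat_mul, mul_one,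
          div_eq_mul_inv (_ : ℝ) (exp _), ← exp_neg]
        push_cast
        ring_nf
    _ ≤ π * n.factorial := sqrt_one_add_mul_div_exp_pow_le_pi_mul_factorial n

lemma norm_hermiteFn (n : ℕ) (z : ℂ) :
    ‖hermiteFn n z‖ = ‖z‖ ^ n * exp (-‖z‖ ^ 2 / 2) / √(π * n.factorial) := by
  rw [hermiteFn, norm_div, norm_mul, norm_pow, Complex.norm_exp, Complex.norm_real,
    norm_of_nonneg (sqrt_nonneg _)]
  norm_cast

lemma rpow_quarter_mul_norm_hermiteFn_le (n : ℕ) (z : ℂ) :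
    ((1 : ℝ) + n) ^ ((1 : ℝ) / 4) * ‖hermiteFn n z‖ ≤ exp (-(√n - ‖z‖) ^ 2 / 2) := by
  have hfac : 0 < √(π * n.factorial) := sqrt_pos.2 (by positivity)
  rw [norm_hermiteFn, mul_div_assoc', div_le_iff₀ hfac]
  calc ((1 : ℝ) + n) ^ ((1 : ℝ) / 4) * (‖z‖ ^ n * exp (-‖z‖ ^ 2 / 2))
      ≤ ((1 : ℝ) + n) ^ ((1 : ℝ) / 4) * (√n ^ n * exp (-n / 2) * exp (-(√n - ‖z‖) ^ 2 / 2)) := by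
        gcongr ?_ * ?_
        exact pow_mul_exp_neg_sq_le n (norm_nonneg z)
    _ ≤ √(π * n.factorial) * exp (-(√n - ‖z‖) ^ 2 / 2) := by
        rw [← mul_assoc]
        gcongr ?_ * _
        exact rpow_quarter_mul_le_sqrt_pi_mul_factorial n
    _ = exp (-(√n - ‖z‖) ^ 2 / 2) * √(π * n.factorial) := mul_comm _ _

lemma norm_mul_hermiteFn_le {n : ℕ} {a : ℂ} {B : ℝ} (hB : 0 ≤ B)
    (ha : ((1 : ℝ) + n) ^ ((1 : ℝ) / 4) * ‖a‖ ≤ B) (z : ℂ) :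
    ‖a * hermiteFn n z‖ ≤ B * (exp (-(√n - ‖z‖) ^ 2 / 2) / √(1 + n)) := by
  have h1 : (0 : ℝ) ≤ 1 + n := by positivity
  rw [norm_mul, mul_div_assoc', le_div_iff₀ (sqrt_pos.2 (by positivity)),
    ← rpow_quarter_mul_self h1]
  calc ‖a‖ * ‖hermiteFn n z‖ * (((1 : ℝ) + n) ^ ((1 : ℝ) / 4) * ((1 : ℝ) + n) ^ ((1 : ℝ) / 4))
      = (((1 : ℝ) + n) ^ ((1 : ℝ) / 4) * ‖a‖) *
          (((1 : ℝ) + n) ^ ((1 : ℝ) / 4) * ‖hermiteFn n z‖) := by ring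
    _ ≤ B * exp (-(√n - ‖z‖) ^ 2 / 2) :=
        mul_le_mul ha (rpow_quarter_mul_norm_hermiteFn_le n z) (by positivity) hB

lemma sqrt_add_one_le_sqrt_add_one {x : ℝ} (hx : 0 ≤ x) : √(x + 1) ≤ √x + 1 := by
  rw [sqrt_le_left (by positivity)]
  nlinarith [sq_sqrt hx, sqrt_nonneg x]

lemma one_div_two_mul_sqrt_add_one_le_sub {x : ℝ} (hx : 0 ≤ x) :
    1 / (2 * √(x + 1)) ≤ √(x + 1) - √x := by
  have hpos : 0 < √(x + 1) := sqrt_pos.2 (by positivity)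
  have hmono : √x ≤ √(x + 1) := sqrt_le_sqrt (by linarith)
  rw [div_le_iff₀ (by positivity)]
  nlinarith [sq_sqrt hx, sq_sqrt (show 0 ≤ x + 1 by positivity)]

lemma mul_exp_neg_sq_le_integral {a b r : ℝ} (hab : a ≤ b) (hba : b ≤ a + 1) :
    (b - a) * exp (-(a - r) ^ 2 / 2) ≤ exp (1 / 2) * ∫ s in a..b, exp (-(s - r) ^ 2 / 4) := by
  -- on `[a, a + 1]`, `(s - r)² ≤ 2 (a - r)² + 2`
  have hlow : ∀ s ∈ Set.Icc a b, exp (-(a - r) ^ 2 / 2 - 1 / 2) ≤ exp (-(s - r) ^ 2 / 4) := by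
    rintro s ⟨has, hsb⟩
    rw [exp_le_exp]
    nlinarith [sq_nonneg (a - r - (s - a))]
  have hint := intervalIntegral.integral_mono_on (μ := volume) hab
    intervalIntegrable_const
    ((by fun_prop : Continuous fun s => exp (-(s - r) ^ 2 / 4)).intervalIntegrable a b) hlow
  rw [intervalIntegral.integral_const, smul_eq_mul] at hint
  calc (b - a) * exp (-(a - r) ^ 2 / 2)
      = exp (1 / 2) * ((b - a) * exp (-(a - r) ^ 2 / 2 - 1 / 2)) := by
        rw [mul_left_comm, ← exp_add]
        ring_nf
    _ ≤ exp (1 / 2) * ∫ s in a..b, exp (-(s - r) ^ 2 / 4) := by gcongr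

lemma exp_neg_sq_div_sqrt_le_integral (n : ℕ) (r : ℝ) :
    exp (-(√n - r) ^ 2 / 2) / √(1 + n)
      ≤ 2 * exp (1 / 2) * ∫ s in √n..√(n + 1 : ℕ), exp (-(s - r) ^ 2 / 4) := by
  have hn : (0 : ℝ) ≤ n := Nat.cast_nonneg n
  have hstep := mul_exp_neg_sq_le_integral (r := r) (sqrt_le_sqrt (by linarith : (n : ℝ) ≤ n + 1))
    (sqrt_add_one_le_sqrt_add_one hn)
  push_cast
  rw [add_comm 1 (n : ℝ)]
  calc exp (-(√n - r) ^ 2 / 2) / √(n + 1)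
      = 2 * (1 / (2 * √(n + 1)) * exp (-(√n - r) ^ 2 / 2)) := by field_simp
    _ ≤ 2 * ((√(n + 1) - √n) * exp (-(√n - r) ^ 2 / 2)) := by
        gcongr
        exact one_div_two_mul_sqrt_add_one_le_sub hn
    _ ≤ 2 * exp (1 / 2) * ∫ s in √n..√(n + 1), exp (-(s - r) ^ 2 / 4) := by
        rw [mul_assoc]
        gcongr

lemma exp_neg_sub_sq_div_four_eq (r : ℝ) :
    (fun s => exp (-(s - r) ^ 2 / 4)) = fun s => exp (-4⁻¹ * (s - r) ^ 2) := by
  ext s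
  ring_nf

lemma integrable_exp_neg_sub_sq_div_four (r : ℝ) :
    Integrable fun s => exp (-(s - r) ^ 2 / 4) := by
  rw [exp_neg_sub_sq_div_four_eq]
  exact (integrable_exp_neg_mul_sq (by norm_num)).comp_sub_right r

lemma integral_exp_neg_sub_sq_div_four (r : ℝ) :
    ∫ s, exp (-(s - r) ^ 2 / 4) = 2 * √π := by
  rw [exp_neg_sub_sq_div_four_eq,
    integral_sub_right_eq_self (fun s => exp (-4⁻¹ * s ^ 2)) r, integral_gaussian,
    show π / 4⁻¹ = 2 ^ 2 * π by ring, sqrt_mul (by positivity), sqrt_sq (by norm_num)]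

lemma sum_range_exp_neg_sq_div_sqrt_le (r : ℝ) (N : ℕ) :
    ∑ n ∈ Finset.range N, exp (-(√n - r) ^ 2 / 2) / √(1 + n) ≤ 4 * exp (1 / 2) * √π := by
  have htelescope : ∑ n ∈ Finset.range N, ∫ s in √n..√(n + 1 : ℕ), exp (-(s - r) ^ 2 / 4)
      = ∫ s in √(0 : ℕ)..√(N : ℕ), exp (-(s - r) ^ 2 / 4) :=
    intervalIntegral.sum_integral_adjacent_intervals (a := fun k : ℕ => √k)
      fun _ _ => (by fun_prop : Continuous fun s => exp (-(s - r) ^ 2 / 4)).intervalIntegrable _ _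
  have hwhole :
      ∫ s in √(0 : ℕ)..√(N : ℕ), exp (-(s - r) ^ 2 / 4) ≤ ∫ s, exp (-(s - r) ^ 2 / 4) := by
    rw [intervalIntegral.integral_of_le (by simp)]
    exact setIntegral_le_integral (integrable_exp_neg_sub_sq_div_four r)
      (.of_forall fun _ => (exp_pos _).le)
  calc ∑ n ∈ Finset.range N, exp (-(√n - r) ^ 2 / 2) / √(1 + n)
      ≤ ∑ n ∈ Finset.range N,
          2 * exp (1 / 2) * ∫ s in √n..√(n + 1 : ℕ), exp (-(s - r) ^ 2 / 4) :=
        Finset.sum_le_sum fun n _ => exp_neg_sq_div_sqrt_le_integral n r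
    _ ≤ 2 * exp (1 / 2) * (2 * √π) := by
        rw [← Finset.mul_sum, htelescope, ← integral_exp_neg_sub_sq_div_four r]
        gcongr
    _ = 4 * exp (1 / 2) * √π := by ring

/-- The `L^∞` norm of `Σ c_n φ_n` is controlled by the `ℓ^{∞,1/4}` norm of `(c_n)`:
there is `C > 0` such that if `(1+n)^{1/4} |c_n| ≤ B` for all `n`, then for every `z`
the series `Σ |c_n φ_n(z)|` converges with sum `≤ C B`; in particular
`|Σ c_n φ_n(z)| ≤ C B`. -/
theorem linfty_bound_by_coefficients :
    ∃ C : ℝ, 0 < C ∧ ∀ (c : ℕ → ℂ) (B : ℝ), 0 ≤ B →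
      (∀ n : ℕ, ((1 : ℝ) + n) ^ ((1 : ℝ) / 4) * ‖c n‖ ≤ B) →
      ∀ z : ℂ,
        Summable (fun n : ℕ => ‖c n * hermiteFn n z‖) ∧
        (∑' n : ℕ, ‖c n * hermiteFn n z‖) ≤ C * B ∧
        ‖∑' n : ℕ, c n * hermiteFn n z‖ ≤ C * B := by
  refine ⟨4 * exp (1 / 2) * √π, by positivity, fun c B hB hc z => ?_⟩
  have hpartial (N : ℕ) :
      ∑ n ∈ Finset.range N, ‖c n * hermiteFn n z‖ ≤ 4 * exp (1 / 2) * √π * B := by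
    calc ∑ n ∈ Finset.range N, ‖c n * hermiteFn n z‖
        ≤ ∑ n ∈ Finset.range N, B * (exp (-(√n - ‖z‖) ^ 2 / 2) / √(1 + n)) :=
          Finset.sum_le_sum fun n _ => norm_mul_hermiteFn_le hB (hc n) z
      _ ≤ B * (4 * exp (1 / 2) * √π) := by
          rw [← Finset.mul_sum]
          exact mul_le_mul_of_nonneg_left (sum_range_exp_neg_sq_div_sqrt_le ‖z‖ N) hB
      _ = 4 * exp (1 / 2) * √π * B := mul_comm _ _
  have hsum : Summable fun n => ‖c n * hermiteFn n z‖ :=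
    summable_of_sum_range_le (fun _ => norm_nonneg _) hpartial
  have htsum := hsum.tsum_le_of_sum_range_le hpartial
  exact ⟨hsum, htsum, (norm_tsum_le_tsum_norm hsum).trans htsum⟩
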